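/- arXiv:1905.12307 — 4 statements merged into one kernel-verified Lean document; each statement's English description precedes it below -/
import Mathlib

section
/- Let (X, d_X) and (Y, d_Y) be metric spaces and C : X ⇉ Y a correspondence with metric distortion at most ε. If σ is a simplex of the Vietoris–Rips complex R_r(X) (i.e., a finite subset of X of diameter at most r), then every finite subset τ of C(σ) is a simplex of R_{r+ε}(Y); that is, C is ε-simplicial from the Vietoris–Rips filtration of X to that of Y. -/
/-- A correspondence `C : X ⇉ Y` with metric distortion at most `ε` is `ε`-simplicial
from the Vietoris–Rips filtration of `X` to that of `Y`: if `σ` is a finite subset of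
`X` of diameter at most `r` (a simplex of `R_r(X)`), then every finite subset `τ` of
the image `C(σ)` has diameter at most `r + ε` (hence is a simplex of `R_{r+ε}(Y)`). -/
theorem correspondence_epsilon_simplicial_rips
    {X Y : Type*} [MetricSpace X] [MetricSpace Y] (C : Set (X × Y))
    (hsurjX : ∀ x : X, ∃ y, (x, y) ∈ C) (hsurjY : ∀ y : Y, ∃ x, (x, y) ∈ C)
    {ε : ℝ}
    (hdist : ∀ x y x' y', (x, y) ∈ C → (x', y') ∈ C → |dist x x' - dist y y'| ≤ ε)
    {r : ℝ} (σ : Set X) (hσfin : σ.Finite)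
    (hσ : ∀ x ∈ σ, ∀ x' ∈ σ, dist x x' ≤ r)
    (τ : Set Y) (hτfin : τ.Finite)
    (hτ : τ ⊆ {y | ∃ x ∈ σ, (x, y) ∈ C}) :
    ∀ y ∈ τ, ∀ y' ∈ τ, dist y y' ≤ r + ε := by
  intro y hy y' hy'
  obtain ⟨x, hxσ, hxy⟩ := hτ hy
  obtain ⟨x', hx'σ, hx'y'⟩ := hτ hy'
  have h := hdist x y x' y' hxy hx'y'
  have := abs_le.mp h
  have hxx' := hσ x hxσ x' hx'σ
  linarith [this.1, this.2]
end

section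
/- Let (X, d_X) and (Y, d_Y) be metric spaces and C : X ⇉ Y a correspondence with metric distortion at most ε. If σ is a simplex of the intrinsic Čech complex Č_r(X) (i.e., a finite subset of X admitting an r-center), then every finite subset of C(σ) is a simplex of Č_{r+ε}(Y); that is, C is ε-simplicial from the Čech filtration of X to that of Y. -/
/-- A correspondence `C : X ⇉ Y` with metric distortion at most `ε` is `ε`-simplicial
from the intrinsic Čech filtration of `X` to that of `Y`: if `σ` is a finite subset of
`X` admitting an `r`-center (a point `c` with `dist x c ≤ r` for all `x ∈ σ`, i.e. a
common point of the closed balls `B(x, r)`), then every finite subset `τ` of the image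
`C(σ)` admits an `(r + ε)`-center, hence is a simplex of `Č_{r+ε}(Y)`. -/
theorem correspondence_epsilon_simplicial_cech
    {X Y : Type*} [MetricSpace X] [MetricSpace Y] (C : Set (X × Y))
    (hsurjX : ∀ x : X, ∃ y, (x, y) ∈ C) (hsurjY : ∀ y : Y, ∃ x, (x, y) ∈ C)
    {ε : ℝ}
    (hdist : ∀ x y x' y', (x, y) ∈ C → (x', y') ∈ C → |dist x x' - dist y y'| ≤ ε)
    {r : ℝ} (σ : Set X) (hσfin : σ.Finite)
    (hσ : ∃ c : X, ∀ x ∈ σ, dist x c ≤ r)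
    (τ : Set Y) (hτfin : τ.Finite)
    (hτ : τ ⊆ {y | ∃ x ∈ σ, (x, y) ∈ C}) :
    ∃ c' : Y, ∀ y ∈ τ, dist y c' ≤ r + ε := by
  obtain ⟨c, hc⟩ := hσ
  obtain ⟨c', hc'⟩ := hsurjX c
  refine ⟨c', fun y hy => ?_⟩
  obtain ⟨x, hxσ, hxy⟩ := hτ hy
  have h := hdist x y c c' hxy hc'
  have := abs_le.mp h
  linarith [hc x hxσ, this.1, this.2]
end

section
/- Let F and G be persistent objects in a category C such that the set of isomorphism classes appearing among the objects F_r and G_r (with consecutive identifications along invertible structure maps) is finite, and such that there are finitely many real numbers r₁ < … < r_n at which F or G changes isomorphism type. Then the interleaving distance between F and G is 0 if and only if F and G are isomorphic as persistent objects (i.e., naturally isomorphic functors). -/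
open CategoryTheory

/-- An `ε`-interleaving between two persistent objects `F G : (ℝ, ≤) ⥤ C`. -/
structure Interleaving {C : Type*} [Category C] (F G : ℝ ⥤ C) (ε : ℝ) : Type _ where
  hε : 0 ≤ ε
  μ : ∀ r : ℝ, F.obj r ⟶ G.obj (r + ε)
  ν : ∀ r : ℝ, G.obj r ⟶ F.obj (r + ε)
  μ_nat : ∀ {r s : ℝ} (h : r ≤ s),
    F.map (homOfLE h) ≫ μ s = μ r ≫ G.map (homOfLE (by linarith : r + ε ≤ s + ε))
  ν_nat : ∀ {r s : ℝ} (h : r ≤ s),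
    G.map (homOfLE h) ≫ ν s = ν r ≫ F.map (homOfLE (by linarith : r + ε ≤ s + ε))
  comp_μν : ∀ r : ℝ, μ r ≫ ν (r + ε) = F.map (homOfLE (by linarith : r ≤ r + ε + ε))
  comp_νμ : ∀ r : ℝ, ν r ≫ μ (r + ε) = G.map (homOfLE (by linarith : r ≤ r + ε + ε))

/-- The interleaving distance between two persistent objects in a category `C`. -/
noncomputable def interleavingDist {C : Type*} [Category C] (F G : ℝ ⥤ C) : ENNReal :=
  sInf {e : ENNReal | ∃ ε : ℝ, Nonempty (Interleaving F G ε) ∧ e = ENNReal.ofReal ε}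

section InterleavingAuxiliary

variable {C : Type*} [Category C] {F G : ℝ ⥤ C} {ε : ℝ} in
def Interleaving.swap (I : Interleaving F G ε) : Interleaving G F ε where
  hε := I.hε
  μ := I.ν
  ν := I.μ
  μ_nat := I.ν_nat
  ν_nat := I.μ_nat
  comp_μν := I.comp_νμ
  comp_νμ := I.comp_μν

namespace InterleavingAux

variable {C : Type*} [Category C] {F G : ℝ ⥤ C} {ε : ℝ}

noncomputable def etaAux (I : Interleaving F G ε) (a r : ℝ) (h1 : a ≤ r) (h2 : r ≤ a + ε)
    [IsIso (F.map (homOfLE h1))] [IsIso (G.map (homOfLE h2))] : F.obj r ⟶ G.obj r :=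
  inv (F.map (homOfLE h1)) ≫ I.μ a ≫ inv (G.map (homOfLE h2))

lemma etaAux_indep (I : Interleaving F G ε) (a a' r : ℝ) (haa' : a ≤ a')
    (h1 : a ≤ r) (h2 : r ≤ a + ε) (h1' : a' ≤ r) (h2' : r ≤ a' + ε)
    (i1 : IsIso (F.map (homOfLE h1))) (i2 : IsIso (G.map (homOfLE h2)))
    (i1' : IsIso (F.map (homOfLE h1'))) (i2' : IsIso (G.map (homOfLE h2'))) :
    etaAux I a r h1 h2 = etaAux I a' r h1' h2' := by
  unfold etaAux
  rw [IsIso.inv_comp_eq, ← Category.assoc,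
    show F.map (homOfLE h1) = F.map (homOfLE haa') ≫ F.map (homOfLE h1') from by
      rw [← F.map_comp]; rfl,
    Category.assoc, Category.assoc, IsIso.hom_inv_id_assoc, ← Category.assoc, I.μ_nat haa',
    Category.assoc]
  congr 1
  rw [IsIso.eq_comp_inv, IsIso.inv_comp_eq, ← G.map_comp]
  rfl

lemma etaAux_nat (I : Interleaving F G ε) (a a' r t : ℝ) (haa' : a ≤ a') (hrt : r ≤ t)
    (h1 : a ≤ r) (h2 : r ≤ a + ε) (h1' : a' ≤ t) (h2' : t ≤ a' + ε)
    (i1 : IsIso (F.map (homOfLE h1))) (i2 : IsIso (G.map (homOfLE h2)))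
    (i1' : IsIso (F.map (homOfLE h1'))) (i2' : IsIso (G.map (homOfLE h2'))) :
    F.map (homOfLE hrt) ≫ etaAux I a' t h1' h2' =
      etaAux I a r h1 h2 ≫ G.map (homOfLE hrt) := by
  unfold etaAux
  rw [← cancel_epi (F.map (homOfLE h1)), ← cancel_mono (G.map (homOfLE h2'))]
  simp only [Category.assoc, IsIso.hom_inv_id_assoc, IsIso.inv_hom_id, Category.comp_id]
  rw [← Category.assoc,
    show F.map (homOfLE h1) ≫ F.map (homOfLE hrt) =
      F.map (homOfLE haa') ≫ F.map (homOfLE h1') from by rw [← F.map_comp, ← F.map_comp]; rfl,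
    Category.assoc, IsIso.hom_inv_id_assoc, ← Category.assoc, I.μ_nat haa', Category.assoc,
    show G.map (homOfLE hrt) ≫ G.map (homOfLE h2') =
      G.map (homOfLE h2) ≫ G.map (homOfLE (by linarith : a + ε ≤ a' + ε)) from by
        rw [← G.map_comp, ← G.map_comp]; rfl,
    IsIso.inv_hom_id_assoc]

lemma etaAux_comp_nu (I : Interleaving F G ε) (r : ℝ)
    (h1 : r - ε ≤ r) (h2 : r ≤ r - ε + ε) (h3 : r ≤ r + ε) (h4 : r + ε ≤ r - ε + ε + ε)
    (i1 : IsIso (F.map (homOfLE h1))) (i2 : IsIso (G.map (homOfLE h2)))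
    (i3 : IsIso (F.map (homOfLE h3))) (i4 : IsIso (F.map (homOfLE h4))) :
    etaAux I (r - ε) r h1 h2 ≫ (I.ν r ≫ inv (F.map (homOfLE h3))) = 𝟙 (F.obj r) := by
  have hνr : inv (G.map (homOfLE h2)) ≫ I.ν r =
      I.ν (r - ε + ε) ≫ inv (F.map (homOfLE h4)) := by
    rw [IsIso.inv_comp_eq, ← Category.assoc, IsIso.eq_comp_inv, I.ν_nat h2]
  unfold etaAux
  simp only [Category.assoc]
  slice_lhs 3 5 => rw [← Category.assoc, hνr]
  slice_lhs 2 3 => rw [I.comp_μν (r - ε)]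
  rw [show F.map (homOfLE (by linarith : r - ε ≤ r - ε + ε + ε)) =
      F.map (homOfLE h1) ≫ F.map (homOfLE h3) ≫ F.map (homOfLE h4) from by
        rw [← F.map_comp, ← F.map_comp]; rfl]
  simp

section Eta

variable (I : Interleaving F G ε) (s : Finset ℝ)
variable (hiso : ∀ (a b : ℝ) (hab : a ≤ b), (∀ c ∈ s, ¬(a < c ∧ c ≤ b)) →
    IsIso (F.map (homOfLE hab)) ∧ IsIso (G.map (homOfLE hab)))
variable (hgap : ∀ c ∈ s, ∀ c' ∈ s, c < c' → 3 * ε < c' - c)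

open Classical in
noncomputable def Eta (r : ℝ) : F.obj r ⟶ G.obj r :=
  if hP : ∃ c ∈ s, r < c ∧ c ≤ r + ε then
    @etaAux _ _ F G ε I (r - ε) r (by linarith [I.hε]) (by linarith)
      ((hiso (r - ε) r (by linarith [I.hε]) (by
        rintro c hc ⟨hc1, hc2⟩
        obtain ⟨c', hc', hc'1, hc'2⟩ := hP
        have h3 := hgap c hc c' hc' (by linarith)
        linarith [I.hε])).1)
      ((hiso r (r - ε + ε) (by linarith) (by rintro c hc ⟨hc1, hc2⟩; linarith)).2)
  else
    @etaAux _ _ F G ε I r r le_rfl (by linarith [I.hε])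
      ((hiso r r le_rfl (by rintro c hc ⟨hc1, hc2⟩; linarith)).1)
      ((hiso r (r + ε) (by linarith [I.hε]) (by
        rintro c hc hc'; exact hP ⟨c, hc, hc'⟩)).2)

lemma Eta_eq (r a : ℝ) (h1 : a ≤ r) (h2 : r ≤ a + ε)
    (i1 : IsIso (F.map (homOfLE h1))) (i2 : IsIso (G.map (homOfLE h2))) :
    Eta I s hiso hgap r = etaAux I a r h1 h2 := by
  unfold Eta
  split_ifs with hP
  · rcases le_total a (r - ε) with h | h
    · exact (etaAux_indep I a (r - ε) r h h1 h2 _ _ i1 i2 _ _).symm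
    · exact etaAux_indep I (r - ε) a r h _ _ h1 h2 _ _ i1 i2
  · rcases le_total a r with h | h
    · exact (etaAux_indep I a r r h h1 h2 le_rfl _ i1 i2 _ _).symm
    · exact (etaAux_indep I r a r h le_rfl _ h1 h2 _ _ i1 i2)


lemma Eta_nat (r t : ℝ) (hrt : r ≤ t) :
    F.map (homOfLE hrt) ≫ Eta I s hiso hgap t = Eta I s hiso hgap r ≫ G.map (homOfLE hrt) := by
  have hε := I.hε
  by_cases hPr : ∃ c ∈ s, r < c ∧ c ≤ r + ε
  · have Kr : ∀ c ∈ s, ¬(r - ε < c ∧ c ≤ r) := by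
      rintro c hc ⟨h1, h2⟩
      obtain ⟨c', hc', hc'1, hc'2⟩ := hPr
      have := hgap c hc c' hc' (by linarith); linarith
    have iF : IsIso (F.map (homOfLE (by linarith : r - ε ≤ r))) :=
      (hiso (r - ε) r (by linarith) Kr).1
    have iG : IsIso (G.map (homOfLE (by linarith : r ≤ r - ε + ε))) :=
      (hiso r (r - ε + ε) (by linarith) (by rintro c hc ⟨h1, h2⟩; linarith)).2
    by_cases hPt : ∃ c ∈ s, t < c ∧ c ≤ t + ε
    · have Kt : ∀ c ∈ s, ¬(t - ε < c ∧ c ≤ t) := by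
        rintro c hc ⟨h1, h2⟩
        obtain ⟨c', hc', hc'1, hc'2⟩ := hPt
        have := hgap c hc c' hc' (by linarith); linarith
      have iF' : IsIso (F.map (homOfLE (by linarith : t - ε ≤ t))) :=
        (hiso (t - ε) t (by linarith) Kt).1
      have iG' : IsIso (G.map (homOfLE (by linarith : t ≤ t - ε + ε))) :=
        (hiso t (t - ε + ε) (by linarith) (by rintro c hc ⟨h1, h2⟩; linarith)).2
      rw [Eta_eq I s hiso hgap r (r - ε) (by linarith) (by linarith) iF iG,
        Eta_eq I s hiso hgap t (t - ε) (by linarith) (by linarith) iF' iG']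
      exact etaAux_nat I (r - ε) (t - ε) r t (by linarith) hrt _ _ _ _ iF iG iF' iG'
    · have iF' : IsIso (F.map (homOfLE (le_refl t))) := by
        rw [show (homOfLE (le_refl t) : (t : ℝ) ⟶ t) = 𝟙 t from rfl, F.map_id]; infer_instance
      have iG' : IsIso (G.map (homOfLE (by linarith : t ≤ t + ε))) :=
        (hiso t (t + ε) (by linarith) (by rintro c hc hc'; exact hPt ⟨c, hc, hc'⟩)).2
      rw [Eta_eq I s hiso hgap r (r - ε) (by linarith) (by linarith) iF iG,
        Eta_eq I s hiso hgap t t le_rfl (by linarith) iF' iG']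
      exact etaAux_nat I (r - ε) t r t (by linarith) hrt _ _ _ _ iF iG iF' iG'
  · have iF : IsIso (F.map (homOfLE (le_refl r))) := by
      rw [show (homOfLE (le_refl r) : (r : ℝ) ⟶ r) = 𝟙 r from rfl, F.map_id]; infer_instance
    have iG : IsIso (G.map (homOfLE (by linarith : r ≤ r + ε))) :=
      (hiso r (r + ε) (by linarith) (by rintro c hc hc'; exact hPr ⟨c, hc, hc'⟩)).2
    by_cases hPt : ∃ c ∈ s, t < c ∧ c ≤ t + ε
    · have Kt : ∀ c ∈ s, ¬(t - ε < c ∧ c ≤ t) := by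
        rintro c hc ⟨h1, h2⟩
        obtain ⟨c', hc', hc'1, hc'2⟩ := hPt
        have := hgap c hc c' hc' (by linarith); linarith
      have iF' : IsIso (F.map (homOfLE (by linarith : t - ε ≤ t))) :=
        (hiso (t - ε) t (by linarith) Kt).1
      have iG' : IsIso (G.map (homOfLE (by linarith : t ≤ t - ε + ε))) :=
        (hiso t (t - ε + ε) (by linarith) (by rintro c hc ⟨h1, h2⟩; linarith)).2
      rcases le_total r (t - ε) with h | h
      · rw [Eta_eq I s hiso hgap r r le_rfl (by linarith) iF iG,
          Eta_eq I s hiso hgap t (t - ε) (by linarith) (by linarith) iF' iG']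
        exact etaAux_nat I r (t - ε) r t h hrt _ _ _ _ iF iG iF' iG'
      · -- use anchor t - ε for r as well
        have iFr : IsIso (F.map (homOfLE (by linarith : t - ε ≤ r))) :=
          (hiso (t - ε) r (by linarith)
            (by rintro c hc ⟨h1, h2⟩; exact Kt c hc ⟨h1, by linarith⟩)).1
        have iGr : IsIso (G.map (homOfLE (by linarith : r ≤ t - ε + ε))) :=
          (hiso r (t - ε + ε) (by linarith)
            (by rintro c hc ⟨h1, h2⟩; exact hPr ⟨c, hc, h1, by linarith⟩)).2
        rw [Eta_eq I s hiso hgap r (t - ε) (by linarith) (by linarith) iFr iGr,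
          Eta_eq I s hiso hgap t (t - ε) (by linarith) (by linarith) iF' iG']
        exact etaAux_nat I (t - ε) (t - ε) r t le_rfl hrt _ _ _ _ iFr iGr iF' iG'
    · have iF' : IsIso (F.map (homOfLE (le_refl t))) := by
        rw [show (homOfLE (le_refl t) : (t : ℝ) ⟶ t) = 𝟙 t from rfl, F.map_id]; infer_instance
      have iG' : IsIso (G.map (homOfLE (by linarith : t ≤ t + ε))) :=
        (hiso t (t + ε) (by linarith) (by rintro c hc hc'; exact hPt ⟨c, hc, hc'⟩)).2
      rw [Eta_eq I s hiso hgap r r le_rfl (by linarith) iF iG,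
        Eta_eq I s hiso hgap t t le_rfl (by linarith) iF' iG']
      exact etaAux_nat I r t r t hrt hrt _ _ _ _ iF iG iF' iG'

lemma Eta_isIso_direct (r : ℝ) (hwin : ∀ c ∈ s, ¬(r - ε < c ∧ c ≤ r + ε)) :
    IsIso (Eta I s hiso hgap r) := by
  have hε := I.hε
  have w1 : ∀ c ∈ s, ¬(r - ε < c ∧ c ≤ r) := by
    rintro c hc ⟨h1, h2⟩; exact hwin c hc ⟨h1, by linarith⟩
  have w2 : ∀ c ∈ s, ¬((r : ℝ) < c ∧ c ≤ r - ε + ε) := by rintro c hc ⟨h1, h2⟩; linarith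
  have w3 : ∀ c ∈ s, ¬((r : ℝ) < c ∧ c ≤ r + ε) := by
    rintro c hc ⟨h1, h2⟩; exact hwin c hc ⟨by linarith, h2⟩
  have w4 : ∀ c ∈ s, ¬(r + ε < c ∧ c ≤ r - ε + ε + ε) := by rintro c hc ⟨h1, h2⟩; linarith
  have i1 := (hiso (r - ε) r (by linarith) w1).1
  have i1g := (hiso (r - ε) r (by linarith) w1).2
  have i2 := (hiso r (r - ε + ε) (by linarith) w2).2
  have i2f := (hiso r (r - ε + ε) (by linarith) w2).1
  have i3 := (hiso r (r + ε) (by linarith) w3).1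
  have i3g := (hiso r (r + ε) (by linarith) w3).2
  have i4 := (hiso (r + ε) (r - ε + ε + ε) (by linarith) w4).1
  have i4g := (hiso (r + ε) (r - ε + ε + ε) (by linarith) w4).2
  have itriv : IsIso (F.map (homOfLE (le_refl r))) := by
    rw [show (homOfLE (le_refl r) : (r : ℝ) ⟶ r) = 𝟙 r from rfl, F.map_id]; infer_instance
  have p1 : r - ε ≤ r := by linarith
  have p2 : r ≤ r - ε + ε := by linarith
  have p3 : r ≤ r + ε := by linarith
  have p4 : r + ε ≤ r - ε + ε + ε := by linarith
  have hR := etaAux_comp_nu I r p1 p2 p3 p4 i1 i2 i3 i4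
  have hL := etaAux_comp_nu I.swap r p1 p2 p3 p4 i1g i2f i3g i4g
  have e1 := Eta_eq I s hiso hgap r (r - ε) p1 p2 i1 i2
  have e2 : Eta I s hiso hgap r = I.μ r ≫ inv (G.map (homOfLE p3)) := by
    rw [Eta_eq I s hiso hgap r r le_rfl p3 itriv i3g]
    unfold etaAux
    rw [← cancel_epi (F.map (homOfLE (le_refl r))), IsIso.hom_inv_id_assoc,
      show F.map (homOfLE (le_refl r)) = 𝟙 (F.obj r) from by
        rw [show (homOfLE (le_refl r) : (r : ℝ) ⟶ r) = 𝟙 r from rfl, F.map_id],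
      Category.id_comp]
  have hR' : Eta I s hiso hgap r ≫
      (I.ν r ≫ inv (F.map (homOfLE p3))) = 𝟙 (F.obj r) := by
    rw [e1]; exact hR
  have hL' : etaAux I.swap (r - ε) r p1 p2 ≫ Eta I s hiso hgap r = 𝟙 (G.obj r) := by
    rw [e2]; exact hL
  have hθ : (I.ν r ≫ inv (F.map (homOfLE p3))) = etaAux I.swap (r - ε) r p1 p2 := by
    rw [← Category.id_comp (I.ν r ≫ inv (F.map (homOfLE p3))), ← hL',
      Category.assoc, hR', Category.comp_id]
  exact ⟨⟨I.ν r ≫ inv (F.map (homOfLE p3)), hR', by rw [hθ]; exact hL'⟩⟩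

lemma Eta_isIso_forward (r t : ℝ) (hrt : r ≤ t)
    (iF : IsIso (F.map (homOfLE hrt))) (iG : IsIso (G.map (homOfLE hrt)))
    (h : IsIso (Eta I s hiso hgap r)) : IsIso (Eta I s hiso hgap t) := by
  have sq := Eta_nat I s hiso hgap r t hrt
  have : Eta I s hiso hgap t =
      inv (F.map (homOfLE hrt)) ≫ Eta I s hiso hgap r ≫ G.map (homOfLE hrt) := by
    rw [IsIso.eq_inv_comp]; rw [sq]
  rw [this]; infer_instance

lemma Eta_isIso_backward (r t : ℝ) (hrt : r ≤ t)
    (iF : IsIso (F.map (homOfLE hrt))) (iG : IsIso (G.map (homOfLE hrt)))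
    (h : IsIso (Eta I s hiso hgap t)) : IsIso (Eta I s hiso hgap r) := by
  have sq := Eta_nat I s hiso hgap r t hrt
  have : Eta I s hiso hgap r =
      (F.map (homOfLE hrt) ≫ Eta I s hiso hgap t) ≫ inv (G.map (homOfLE hrt)) := by
    rw [IsIso.eq_comp_inv]; exact sq.symm
  rw [this]; infer_instance

lemma Eta_isIso (t : ℝ) : IsIso (Eta I s hiso hgap t) := by
  classical
  have hε := I.hε
  by_cases hA : (s.filter (· ≤ t)).Nonempty
  · set c := (s.filter (· ≤ t)).max' hA with hc
    have hmem := Finset.mem_filter.mp ((s.filter (· ≤ t)).max'_mem hA)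
    have hcs : c ∈ s := hmem.1
    have hct : c ≤ t := hmem.2
    have hmax : ∀ x ∈ s, x ≤ t → x ≤ c := fun x hx hxt =>
      Finset.le_max' (s.filter (· ≤ t)) x (Finset.mem_filter.mpr ⟨hx, hxt⟩)
    have hbig : ∀ x ∈ s, c < x → c + 3 * ε < x := fun x hx hcx => by
      have := hgap c hcs x hx hcx; linarith
    have hdir : IsIso (Eta I s hiso hgap (c + ε)) := by
      apply Eta_isIso_direct
      rintro x hx ⟨a, b⟩
      have := hbig x hx (by linarith); linarith
    rcases le_total t (c + ε) with h | h
    · have hfree : ∀ x ∈ s, ¬(t < x ∧ x ≤ c + ε) := by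
        rintro x hx ⟨a, b⟩
        have := hbig x hx (by linarith); linarith
      exact Eta_isIso_backward I s hiso hgap t (c + ε) h
        (hiso t (c + ε) h hfree).1 (hiso t (c + ε) h hfree).2 hdir
    · have hfree : ∀ x ∈ s, ¬(c + ε < x ∧ x ≤ t) := by
        rintro x hx ⟨a, b⟩
        have := hmax x hx b; linarith
      exact Eta_isIso_forward I s hiso hgap (c + ε) t h
        (hiso (c + ε) t h hfree).1 (hiso (c + ε) t h hfree).2 hdir
  · have hall : ∀ x ∈ s, t < x := fun x hx => by
      by_contra hcon
      push_neg at hcon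
      exact hA ⟨x, Finset.mem_filter.mpr ⟨hx, hcon⟩⟩
    by_cases hB : ∃ m ∈ s, m ≤ t + ε
    · obtain ⟨m, hm, hmt⟩ := hB
      have hmt' : t < m := hall m hm
      have hdir : IsIso (Eta I s hiso hgap (m - 2 * ε)) := by
        apply Eta_isIso_direct
        rintro x hx ⟨a, b⟩
        rcases lt_or_ge x m with h' | h'
        · have := hgap x hx m hm h'; linarith
        · linarith
      have hfree : ∀ x ∈ s, ¬(m - 2 * ε < x ∧ x ≤ t) := by
        rintro x hx ⟨a, b⟩
        exact absurd b (not_le.mpr (hall x hx))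
      exact Eta_isIso_forward I s hiso hgap (m - 2 * ε) t (by linarith)
        (hiso (m - 2 * ε) t (by linarith) hfree).1
        (hiso (m - 2 * ε) t (by linarith) hfree).2 hdir
    · push_neg at hB
      apply Eta_isIso_direct
      rintro x hx ⟨a, b⟩
      exact absurd b (not_le.mpr (hB x hx))

noncomputable def etaIso : F ≅ G := by
  haveI := Eta_isIso I s hiso hgap
  exact NatIso.ofComponents (fun r => asIso (Eta I s hiso hgap r))
    (fun {X Y} f => Eta_nat I s hiso hgap X Y f.le)

end Eta

end InterleavingAux

variable {C : Type*} [Category C] {F G : ℝ ⥤ C} in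
def Interleaving.ofIso (i : F ≅ G) : Interleaving F G 0 where
  hε := le_rfl
  μ r := i.hom.app r ≫ G.map (homOfLE (by linarith : r ≤ r + 0))
  ν r := i.inv.app r ≫ F.map (homOfLE (by linarith : r ≤ r + 0))
  μ_nat {r t} h := by
    rw [← Category.assoc, i.hom.naturality (homOfLE h), Category.assoc, Category.assoc,
      ← G.map_comp, ← G.map_comp]
    rfl
  ν_nat {r t} h := by
    rw [← Category.assoc, i.inv.naturality (homOfLE h), Category.assoc, Category.assoc,
      ← F.map_comp, ← F.map_comp]
    rfl
  comp_μν r := by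
    simp only [Category.assoc]
    slice_lhs 2 3 => rw [i.inv.naturality (homOfLE (by linarith : r ≤ r + 0))]
    simp only [Category.assoc]
    rw [← Category.assoc, Iso.hom_inv_id_app, Category.id_comp, ← F.map_comp]
    rfl
  comp_νμ r := by
    simp only [Category.assoc]
    slice_lhs 2 3 => rw [i.hom.naturality (homOfLE (by linarith : r ≤ r + 0))]
    simp only [Category.assoc]
    rw [← Category.assoc, Iso.inv_hom_id_app, Category.id_comp, ← G.map_comp]
    rfl

end InterleavingAuxiliary

/-- For persistent objects of "finite type" — there are finitely many critical values
outside of which all structure maps of `F` and `G` are isomorphisms (so that only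
finitely many isomorphism types occur) — the interleaving distance vanishes if and
only if `F` and `G` are isomorphic as persistent objects (naturally isomorphic
functors). -/
theorem interleavingDist_eq_zero_iff_iso {C : Type*} [Category C] (F G : ℝ ⥤ C)
    (hfin : ∃ s : Finset ℝ, ∀ (a b : ℝ) (hab : a ≤ b),
      (∀ c ∈ s, ¬(a < c ∧ c ≤ b)) →
        IsIso (F.map (homOfLE hab)) ∧ IsIso (G.map (homOfLE hab))) :
    interleavingDist F G = 0 ↔ Nonempty (F ≅ G) := by
  classical
  obtain ⟨s, hiso⟩ := hfin
  constructor
  · intro hd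
    have hδ' : ∃ δ : ℝ, 0 < δ ∧ ∀ c ∈ s, ∀ c' ∈ s, c < c' → δ ≤ c' - c := by
      by_cases hT : ((s ×ˢ s).filter (fun p => p.1 < p.2)).Nonempty
      · set T := ((s ×ˢ s).filter (fun p => p.1 < p.2)).image (fun p => p.2 - p.1) with hTdef
        have hTne : T.Nonempty := hT.image _
        refine ⟨T.min' hTne, ?_, ?_⟩
        · obtain ⟨x, hx, hx2⟩ := Finset.mem_image.mp (T.min'_mem hTne)
          have := (Finset.mem_filter.mp hx).2
          rw [← hx2]; exact sub_pos.mpr this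
        · intro c hc c' hc' h
          exact T.min'_le _ (Finset.mem_image.mpr ⟨(c, c'),
            Finset.mem_filter.mpr ⟨Finset.mem_product.mpr ⟨hc, hc'⟩, h⟩, rfl⟩)
      · exact ⟨1, one_pos, fun c hc c' hc' h => absurd ⟨(c, c'),
          Finset.mem_filter.mpr ⟨Finset.mem_product.mpr ⟨hc, hc'⟩, h⟩⟩ hT⟩
    obtain ⟨δ, hδ0, hδ⟩ := hδ'
    have hlt : interleavingDist F G < ENNReal.ofReal (δ / 3) := by
      rw [hd]; exact ENNReal.ofReal_pos.mpr (by linarith)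
    unfold interleavingDist at hlt
    obtain ⟨e, ⟨ε, ⟨I⟩, rfl⟩, hlt'⟩ := sInf_lt_iff.mp hlt
    have hε := I.hε
    have hεδ : ε < δ / 3 := by rwa [ENNReal.ofReal_lt_ofReal_iff (by linarith)] at hlt'
    exact ⟨InterleavingAux.etaIso I s hiso
      (fun c hc c' hc' h => lt_of_lt_of_le (by linarith) (hδ c hc c' hc' h))⟩
  · rintro ⟨i⟩
    exact le_antisymm (sInf_le ⟨0, ⟨Interleaving.ofIso i⟩, by simp⟩) zero_le
end

section
/- Let A and B be copersistent graded algebras indexed by ℝ. Suppose there exist parameters s < t such that the structure map B_s → B_t (in the copersistent direction) is an isomorphism of graded algebras, and suppose that for every ε with 2ε < t − s there is no injective graded algebra homomorphism B_s → A_{s'} for any s' with s ≤ s' ≤ s + ε. Then the interleaving distance between A and B in the category of graded algebras is at least (t − s)/2. -/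
open CategoryTheory

universe u

/-- A graded (unital, associative) algebra over a field `k`: a `ℤ`-graded vector space
with a unit in degree `0` and degree-additive multiplication. -/
structure GrAlg (k : Type u) [Field k] : Type (u + 1) where
  M : ℤ → ModuleCat.{u} k
  one : M 0
  mul : ∀ i j : ℤ, M i →ₗ[k] M j →ₗ[k] M (i + j)

variable {k : Type u} [Field k]

/-- Morphisms of graded algebras: degreewise linear maps preserving the
multiplication and the unit. -/
instance : Category (GrAlg k) where
  Hom A B := {f : ∀ i : ℤ, A.M i →ₗ[k] B.M i //
    (∀ (i j : ℤ) (a : A.M i) (b : A.M j),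
      f (i + j) (A.mul i j a b) = B.mul i j (f i a) (f j b)) ∧ f 0 A.one = B.one}
  id A := ⟨fun _ => LinearMap.id, fun _ _ _ _ => rfl, rfl⟩
  comp {A B C} f g := ⟨fun i => (g.1 i).comp (f.1 i), by
    refine ⟨fun i j a b => ?_, ?_⟩
    · simp only [LinearMap.comp_apply, f.2.1, g.2.1]
    · simp only [LinearMap.comp_apply, f.2.2, g.2.2]⟩
  id_comp f := Subtype.ext (funext fun i => LinearMap.comp_id _)
  comp_id f := Subtype.ext (funext fun i => LinearMap.id_comp _)
  assoc f g h := Subtype.ext (funext fun i => rfl)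

/-- The forgetful functor from graded algebras to graded vector spaces. -/
def forgetGr (k : Type u) [Field k] : GrAlg k ⥤ GradedObject ℤ (ModuleCat.{u} k) where
  obj A := A.M
  map f := fun i => ModuleCat.ofHom (f.1 i)
  map_id A := rfl
  map_comp f g := rfl
/-- Lower bound for the graded-algebra interleaving distance.  If `A, B` are
(co)persistent graded algebras (in the persistence convention) such that the structure
map `B_s → B_t` is an isomorphism, and for every `ε` with `2ε < t - s` there is no
injective graded algebra homomorphism `B_s → A_{s'}` for any `s' ∈ [s, s + ε]`, then
the interleaving distance between `A` and `B` is at least `(t - s)/2`. -/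
theorem interleavingDist_grAlg_lower_bound
    (A B : ℝ ⥤ GrAlg k) (s t : ℝ) (hst : s < t)
    (hiso : IsIso (B.map (homOfLE hst.le)))
    (hnoinj : ∀ ε : ℝ, 0 ≤ ε → 2 * ε < t - s → ∀ s' : ℝ, s ≤ s' → s' ≤ s + ε →
      ¬ ∃ f : B.obj s ⟶ A.obj s', ∀ i : ℤ, Function.Injective (f.1 i)) :
    ENNReal.ofReal ((t - s) / 2) ≤ interleavingDist A B := by
  refine le_sInf ?_
  rintro e ⟨ε, ⟨I⟩, rfl⟩
  apply ENNReal.ofReal_le_ofReal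
  by_contra h
  push_neg at h
  have h2 : 2 * ε < t - s := by linarith
  have hε := I.hε
  apply hnoinj ε I.hε h2 (s + ε) (by linarith) le_rfl
  refine ⟨I.ν s, fun i => ?_⟩
  have hid : I.ν s ≫ I.μ (s + ε) ≫ B.map (homOfLE (show s + ε + ε ≤ t by linarith)) ≫
      inv (B.map (homOfLE hst.le)) = 𝟙 (B.obj s) := by
    rw [← Category.assoc, ← Category.assoc, I.comp_νμ s, Category.assoc,
      ← Functor.map_comp_assoc]
    have : (homOfLE (show s ≤ s + ε + ε by linarith) ≫
        homOfLE (show s + ε + ε ≤ t by linarith)) = homOfLE hst.le := rfl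
    rw [this, IsIso.hom_inv_id]
  have hcomp := congrFun (congrArg Subtype.val hid) i
  have hinj : Function.Injective
      ((I.ν s ≫ I.μ (s + ε) ≫ B.map (homOfLE (show s + ε + ε ≤ t by linarith)) ≫
        inv (B.map (homOfLE hst.le))).1 i) := by
    rw [hcomp]
    exact fun a b hab => hab
  exact fun a b hab => hinj (congrArg
    (⇑((I.μ (s + ε) ≫ B.map (homOfLE (show s + ε + ε ≤ t by linarith)) ≫
      inv (B.map (homOfLE hst.le))).1 i)) hab)
end
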